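/- arXiv:1807.10217 — 5 statements merged into one kernel-verified Lean document; each statement's English description precedes it below -/
import Mathlib

section
/- The map ν from triangular arrays to B(w), defined by ν(Y)_{ij} = y_{i,j-i+1} - y_{i-1,j-i+2} (with the second term 0 when i = 1), is a well-defined bijection from P(w) to B(w), with inverse given by ν̄(b)_{ij} = Σ_{1 ≤ h ≤ i} b_{h,i+j-1}. -/
/-!
`ν̄` takes partial column sums `∑_{h ≤ i} b h c` and `ν` takes the successive differences
`y i (c-i+1) - y (i-1) (c-i+2)` down the same column, so the two are inverse as soon as these
differences do not truncate, which is exactly the ladder condition. Reindexing the `i`-th chute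
by the column `c = i + j - 1` turns its sum into `∑_{h ≤ i ≤ c} b h c`, the `i`-th coordinate of
`∑ b h c γ_{hc}`.
-/

open scoped BigOperators Classical

noncomputable section

/-- A triangular array of size `n`: entries `y i j` for `1 ≤ i ≤ n`, `1 ≤ j ≤ n - i + 1`
(zero outside this range), weakly decreasing along ladders: `y (i-1) (j+1) ≤ y i j`. -/
def IsTri (n : ℕ) (y : ℕ → ℕ → ℕ) : Prop :=
  (∀ i j, ¬(1 ≤ i ∧ i ≤ n ∧ 1 ≤ j ∧ j ≤ n - i + 1) → y i j = 0) ∧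
  (∀ i j, 2 ≤ i → i ≤ n → 1 ≤ j → j ≤ n - i + 1 → y (i - 1) (j + 1) ≤ y i j)

/-- The dimension vector of a triangular array: the `i`-th chute sum. -/
def udim (n : ℕ) (y : ℕ → ℕ → ℕ) (i : ℕ) : ℕ := ∑ j ∈ Finset.Icc 1 (n - i + 1), y i j

/-- The set `P(w)` of triangular arrays of size `n` with dimension vector `w`. -/
def InP (n : ℕ) (w : ℕ → ℕ) (y : ℕ → ℕ → ℕ) : Prop :=
  IsTri n y ∧ ∀ i, 1 ≤ i → i ≤ n → udim n y i = w i

/-- The set `B(w)`: families `(b i j)` for `1 ≤ i ≤ j ≤ n` (zero outside) with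
`∑ b i j • γ_{ij} = w`, i.e. for each `1 ≤ k ≤ n`, `∑_{i ≤ k ≤ j} b i j = w k`. -/
def InB (n : ℕ) (w : ℕ → ℕ) (b : ℕ → ℕ → ℕ) : Prop :=
  (∀ i j, ¬(1 ≤ i ∧ i ≤ j ∧ j ≤ n) → b i j = 0) ∧
  ∀ k, 1 ≤ k → k ≤ n → (∑ i ∈ Finset.Icc 1 k, ∑ j ∈ Finset.Icc k n, b i j) = w k

/-- The map `ν : P(w) → B(w)`. -/
def nuMap (n : ℕ) (y : ℕ → ℕ → ℕ) : ℕ → ℕ → ℕ := fun i j =>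
  if 1 ≤ i ∧ i ≤ j ∧ j ≤ n then y i (j - i + 1) - y (i - 1) (j - i + 2) else 0

/-- The map `ν̄ : B(w) → P(w)`. -/
def nubarMap (n : ℕ) (b : ℕ → ℕ → ℕ) : ℕ → ℕ → ℕ := fun i j =>
  if 1 ≤ i ∧ i ≤ n ∧ 1 ≤ j ∧ j ≤ n - i + 1 then ∑ h ∈ Finset.Icc 1 i, b h (i + j - 1) else 0

/-- `Raise Y i j` increments the entry in chute `i`, column `j`. -/
def Raise (y : ℕ → ℕ → ℕ) (i j : ℕ) : ℕ → ℕ → ℕ := fun p q =>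
  if p = i ∧ q = j then y p q + 1 else y p q

/-- `Lower Y i j` decrements the entry in chute `i`, column `j`. -/
def Lower (y : ℕ → ℕ → ℕ) (i j : ℕ) : ℕ → ℕ → ℕ := fun p q =>
  if p = i ∧ q = j then y p q - 1 else y p q

/-- `K_i(Y,k) = max({1} ∪ {j : 2 ≤ j ≤ k, y i j < y (i+1) (j-1)})`. -/
def Kval (y : ℕ → ℕ → ℕ) (i k : ℕ) : ℕ :=
  ((Finset.Icc 2 k).filter (fun j => y i j < y (i + 1) (j - 1))).sup id ⊔ 1

/-- Procedure `a`: `a(Y,i,k) = (Raise(Y,i,K_i(Y,k)), i-1, K_i(Y,k))`. -/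
def aStep (t : (ℕ → ℕ → ℕ) × ℕ × ℕ) : (ℕ → ℕ → ℕ) × ℕ × ℕ :=
  (Raise t.1 t.2.1 (Kval t.1 t.2.1 t.2.2), t.2.1 - 1, Kval t.1 t.2.1 t.2.2)

/-- Procedure `A_i`: apply `a` exactly `i` times starting from `(Y, i, n - i + 1)`. -/
def Aproc (n i : ℕ) (y : ℕ → ℕ → ℕ) : ℕ → ℕ → ℕ := (aStep^[i] (y, i, n - i + 1)).1

/-- `Del↘(Y)` : delete the first chute. -/
def delChute (y : ℕ → ℕ → ℕ) : ℕ → ℕ → ℕ := fun i j =>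
  if 1 ≤ i ∧ 1 ≤ j then y (i + 1) j else 0

/-- `Y ∪↘ Q` : adjoin `Q` as the new topmost chute. -/
def adjChute (y : ℕ → ℕ → ℕ) (q : ℕ → ℕ) : ℕ → ℕ → ℕ := fun i j =>
  if i = 0 then 0 else if i = 1 then q j else y (i - 1) j

/-- The set whose infimum is `I(Y,k)`; `I(Y,k) < ∞` iff this set is nonempty. -/
def Iset (n : ℕ) (y : ℕ → ℕ → ℕ) (k : ℕ) : Set ℕ := {j | k ≤ j ∧ j ≤ n ∧ 0 < y 1 j}

/-- `I(Y,k)`: the smallest `j ≥ k` with `y 1 j > 0`. -/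
def Idef (n : ℕ) (y : ℕ → ℕ → ℕ) (k : ℕ) : ℕ := sInf (Iset n y k)

/-- The set whose infimum is `J(Y,k)`; `J(Y,k) < ∞` iff this set is nonempty. -/
def Jset (n : ℕ) (y : ℕ → ℕ → ℕ) (k : ℕ) : Set ℕ :=
  {j | Idef n y k < j ∧ j ≤ n ∧ y 1 j < y 2 (j - 1)}

/-- `J(Y,k)`: the smallest `j > I(Y,k)` with `y 1 j < y 2 (j-1)`. -/
def Jdef (n : ℕ) (y : ℕ → ℕ → ℕ) (k : ℕ) : ℕ := sInf (Jset n y k)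

/-- Procedure `B`, by induction on the size `n`. -/
def Bproc : ℕ → (ℕ → ℕ → ℕ) → ℕ → ((ℕ → ℕ → ℕ) × ℕ)
  | 0, y, _ => (y, 1)
  | n + 1, y, k =>
    if (Jset (n + 1) y k).Nonempty then
      let zr := Bproc n (delChute y) (Jdef (n + 1) y k - 1)
      (Lower (adjChute zr.1 (y 1)) 1 (Idef (n + 1) y k), zr.2 + 1)
    else (Lower y 1 (Idef (n + 1) y k), 1)

/-- Apply `A_m^{y_{N+1-m,m} - y_{N-m,m+1}}` for `m = 1, …, M` (innermost `A_1`). -/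
def applyAs (N : ℕ) (y : ℕ → ℕ → ℕ) : ℕ → (ℕ → ℕ → ℕ) → (ℕ → ℕ → ℕ)
  | 0, z => z
  | m + 1, z => (Aproc N (m + 1))^[y (N - m) (m + 1) - y (N - m - 1) (m + 2)] (applyAs N y m z)

/-- `Del↗(Y)` : delete the last ladder (of an array of size `n`). -/
def delLadder (n : ℕ) (y : ℕ → ℕ → ℕ) : ℕ → ℕ → ℕ := fun i j =>
  if 1 ≤ i ∧ 1 ≤ j ∧ i + j ≤ n then y i j else 0

/-- The combinatorial Fourier transform `T`. -/
def Tmap : ℕ → (ℕ → ℕ → ℕ) → (ℕ → ℕ → ℕ)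
  | 0, y => y
  | 1, y => y
  | n + 2, y =>
      applyAs (n + 2) y (n + 2) (adjChute (Tmap (n + 1) (delLadder (n + 2) y)) (fun _ => 0))

/-- Iterate procedure `B` (with `k = 1`), recording the list of produced integers `q`. -/
def Biter (n : ℕ) (y : ℕ → ℕ → ℕ) : ℕ → ((ℕ → ℕ → ℕ) × List ℕ)
  | 0 => (y, [])
  | m + 1 =>
    let p := Biter n y m
    let b := Bproc n p.1 1
    (b.1, p.2 ++ [b.2])

/-- `Y ∪↗ P` : adjoin `P` as the new bottommost ladder (result of size `N`). -/
def adjLadder (N : ℕ) (z : ℕ → ℕ → ℕ) (p : ℕ → ℕ) : ℕ → ℕ → ℕ := fun i j =>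
  if 1 ≤ i ∧ 1 ≤ j ∧ i + j = N + 1 then p j else z i j

/-- The inverse combinatorial Fourier transform `T'`. -/
def Tinv : ℕ → (ℕ → ℕ → ℕ) → (ℕ → ℕ → ℕ)
  | 0, y => y
  | 1, y => y
  | n + 2, y =>
    let r := Biter (n + 2) y (udim (n + 2) y 1)
    adjLadder (n + 2) (Tinv (n + 1) (delChute r.1)) (fun j => r.2.countP (fun q => decide (j ≤ q)))

/-- The composition `x_{i+j-1} ∘ ⋯ ∘ x_{i+1} ∘ x_i` (`j` maps, starting at vertex `i`). -/
def chainMap (w : ℕ → ℕ) (x : ∀ m : ℕ, (Fin (w m) → ℂ) →ₗ[ℂ] (Fin (w (m + 1)) → ℂ)) (i : ℕ) :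
    ∀ j : ℕ, (Fin (w i) → ℂ) →ₗ[ℂ] (Fin (w (i + j)) → ℂ)
  | 0 => LinearMap.id
  | j + 1 => (x (i + j)).comp (chainMap w x i j)

/-- `u` is a Jordan basis of type `Y` for the representation `x`. -/
def IsJordanBasis (n : ℕ) (w : ℕ → ℕ) (y : ℕ → ℕ → ℕ)
    (x : ∀ m : ℕ, (Fin (w m) → ℂ) →ₗ[ℂ] (Fin (w (m + 1)) → ℂ))
    (u : ∀ m : ℕ, ℕ → ℕ → (Fin (w m) → ℂ)) : Prop :=
  (∀ i, 1 ≤ i → i ≤ n →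
    (LinearIndependent ℂ
      (fun p : {p : ℕ × ℕ // 1 ≤ p.1 ∧ p.1 ≤ n - i + 1 ∧ 1 ≤ p.2 ∧ p.2 ≤ y i p.1} =>
        u i p.1.1 p.1.2) ∧
    Submodule.span ℂ
      (Set.range (fun p : {p : ℕ × ℕ // 1 ≤ p.1 ∧ p.1 ≤ n - i + 1 ∧ 1 ≤ p.2 ∧ p.2 ≤ y i p.1} =>
        u i p.1.1 p.1.2)) = ⊤)) ∧
  (∀ i j k, 1 ≤ i → i + 1 ≤ n → 1 ≤ j → j ≤ n - i + 1 → 1 ≤ k → k ≤ y i j →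
    x i (u i j k) = if 2 ≤ j then u (i + 1) (j - 1) k else 0)

/-- `V` is a kernel flag of type `Y` (with the convention `V i 0 = ⊥`). -/
def IsKerFlag (n : ℕ) (w : ℕ → ℕ) (y : ℕ → ℕ → ℕ)
    (V : ∀ i : ℕ, ℕ → Submodule ℂ (Fin (w i) → ℂ)) : Prop :=
  ∀ i, 1 ≤ i → i ≤ n →
    V i 0 = ⊥ ∧
    (∀ j, j ≤ n - i → V i j ≤ V i (j + 1)) ∧
    V i (n - i + 1) = ⊤ ∧
    (∀ j, 1 ≤ j → j ≤ n - i + 1 → Module.finrank ℂ (V i j) = ∑ h ∈ Finset.Icc 1 j, y i h)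

/-- The representation `x` preserves the kernel flag `V`. -/
def PreservesFlag (n : ℕ) (w : ℕ → ℕ)
    (x : ∀ m : ℕ, (Fin (w m) → ℂ) →ₗ[ℂ] (Fin (w (m + 1)) → ℂ))
    (V : ∀ i : ℕ, ℕ → Submodule ℂ (Fin (w i) → ℂ)) : Prop :=
  ∀ i, 1 ≤ i → i + 1 ≤ n → ∀ j, 1 ≤ j → j ≤ n - i + 1 → ∀ v ∈ V i j,
    (j = 1 → x i v = 0) ∧ (2 ≤ j → x i v ∈ V (i + 1) (j - 1))

/-- The flag of kernels `V i j = ker (x_{i+j-1} ∘ ⋯ ∘ x_i)`. -/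
def kerFlag (w : ℕ → ℕ) (x : ∀ m : ℕ, (Fin (w m) → ℂ) →ₗ[ℂ] (Fin (w (m + 1)) → ℂ)) :
    ∀ i : ℕ, ℕ → Submodule ℂ (Fin (w i) → ℂ) := fun i j => LinearMap.ker (chainMap w x i j)

/-- The Lie-algebra stabilizer of the flag `V` inside `𝔤(w) = ∏ End(ℂ^{w_i})`. -/
def stabFlagSub (n : ℕ) (w : ℕ → ℕ) (V : ∀ i : ℕ, ℕ → Submodule ℂ (Fin (w i) → ℂ)) :
    Submodule ℂ (∀ i : Fin n, (Fin (w (i.val + 1)) → ℂ) →ₗ[ℂ] (Fin (w (i.val + 1)) → ℂ)) where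
  carrier := {g | ∀ (i : Fin n) (j : ℕ), 1 ≤ j → j ≤ n - (i.val + 1) + 1 →
    ∀ v ∈ V (i.val + 1) j, g i v ∈ V (i.val + 1) j}
  add_mem' := by
    intro a b ha hb i j h1 h2 v hv
    simpa using (V (i.val + 1) j).add_mem (ha i j h1 h2 v hv) (hb i j h1 h2 v hv)
  zero_mem' := by
    intro i j h1 h2 v hv
    simpa using (V (i.val + 1) j).zero_mem
  smul_mem' := by
    intro c a ha i j h1 h2 v hv
    simpa using (V (i.val + 1) j).smul_mem c (ha i j h1 h2 v hv)

/-- The linear space `E(w)^V` of representations preserving the kernel flag `V`. -/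
def presFlagSub (n : ℕ) (w : ℕ → ℕ) (V : ∀ i : ℕ, ℕ → Submodule ℂ (Fin (w i) → ℂ)) :
    Submodule ℂ (∀ i : Fin (n - 1), (Fin (w (i.val + 1)) → ℂ) →ₗ[ℂ] (Fin (w (i.val + 2)) → ℂ)) where
  carrier := {x | ∀ (i : Fin (n - 1)) (j : ℕ), 1 ≤ j → j ≤ n - (i.val + 1) + 1 →
    ∀ v ∈ V (i.val + 1) j,
      (j = 1 → x i v = 0) ∧ (2 ≤ j → x i v ∈ V (i.val + 2) (j - 1))}
  add_mem' := by
    intro a b ha hb i j h1 h2 v hv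
    obtain ⟨ha1, ha2⟩ := ha i j h1 h2 v hv
    obtain ⟨hb1, hb2⟩ := hb i j h1 h2 v hv
    constructor
    · intro hj
      simp [ha1 hj, hb1 hj]
    · intro hj
      simpa using (V (i.val + 2) (j - 1)).add_mem (ha2 hj) (hb2 hj)
  zero_mem' := by
    intro i j h1 h2 v hv
    constructor
    · intro _; simp
    · intro _
      simpa using (V (i.val + 2) (j - 1)).zero_mem
  smul_mem' := by
    intro c a ha i j h1 h2 v hv
    obtain ⟨ha1, ha2⟩ := ha i j h1 h2 v hv
    constructor
    · intro hj
      simp [ha1 hj]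
    · intro hj
      simpa using (V (i.val + 2) (j - 1)).smul_mem c (ha2 hj)

end

open Finset

theorem sum_Icc_one_eq_sum_Icc {M : Type*} [AddCommMonoid M] {k n : ℕ} (hkn : k ≤ n)
    (f : ℕ → M) : ∑ j ∈ Icc 1 (n - k + 1), f j = ∑ c ∈ Icc k n, f (c - k + 1) := by
  refine sum_nbij' (fun j => j + k - 1) (fun c => c - k + 1) ?_ ?_ ?_ ?_ ?_ <;>
    simp only [mem_Icc] <;> intro a ha <;> first | omega | (congr 1; omega)

section

variable {n : ℕ}

theorem sum_nuMap_eq {y : ℕ → ℕ → ℕ} (hy : IsTri n y) {i c : ℕ} (hi : 1 ≤ i) (hic : i ≤ c)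
    (hc : c ≤ n) : ∑ h ∈ Icc 1 i, nuMap n y h c = y i (c - i + 1) := by
  induction i, hi using Nat.le_induction with
  | base =>
    have hy0 : y 0 (c - 1 + 2) = 0 := hy.1 0 _ (by omega)
    simp [nuMap, show 1 ≤ c by omega, hc, hy0]
  | succ i hi ih =>
    have hmono := hy.2 (i + 1) (c - i) (by omega) (by omega) (by omega) (by omega)
    rw [sum_Icc_succ_top (by omega), ih (by omega), nuMap, if_pos ⟨by omega, hic, hc⟩]
    simp only [Nat.add_sub_cancel] at hmono ⊢
    rw [show c - (i + 1) + 1 = c - i by omega, show c - (i + 1) + 2 = c - i + 1 by omega]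
    omega

theorem nubarMap_apply_sub_add_one (b : ℕ → ℕ → ℕ) {i c : ℕ} (hic : i ≤ c) (hc : c ≤ n) :
    nubarMap n b i (c - i + 1) = ∑ h ∈ Icc 1 i, b h c := by
  rcases Nat.eq_zero_or_pos i with rfl | hi
  · simp [nubarMap]
  · rw [nubarMap, if_pos ⟨hi, by omega, by omega, by omega⟩, show i + (c - i + 1) - 1 = c by omega]

theorem sum_sum_nuMap_eq_udim {y : ℕ → ℕ → ℕ} (hy : IsTri n y) {k : ℕ} (hk : 1 ≤ k)
    (hkn : k ≤ n) : ∑ i ∈ Icc 1 k, ∑ j ∈ Icc k n, nuMap n y i j = udim n y k := by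
  rw [udim, sum_Icc_one_eq_sum_Icc hkn, sum_comm]
  exact sum_congr rfl fun c hc => sum_nuMap_eq hy hk (mem_Icc.1 hc).1 (mem_Icc.1 hc).2

theorem udim_nubarMap (b : ℕ → ℕ → ℕ) {k : ℕ} (hkn : k ≤ n) :
    udim n (nubarMap n b) k = ∑ i ∈ Icc 1 k, ∑ j ∈ Icc k n, b i j := by
  rw [udim, sum_Icc_one_eq_sum_Icc hkn, sum_comm]
  exact sum_congr rfl fun c hc => nubarMap_apply_sub_add_one b (mem_Icc.1 hc).1 (mem_Icc.1 hc).2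

theorem isTri_nubarMap (b : ℕ → ℕ → ℕ) : IsTri n (nubarMap n b) := by
  refine ⟨fun i j hij => by simp only [nubarMap, if_neg hij], fun i j hi hin hj hjn => ?_⟩
  have hprev := nubarMap_apply_sub_add_one (n := n) b (i := i - 1) (c := i + j - 1) (by omega)
    (by omega)
  have hcur := nubarMap_apply_sub_add_one (n := n) b (i := i) (c := i + j - 1) (by omega)
    (by omega)
  rw [show i + j - 1 - (i - 1) + 1 = j + 1 by omega] at hprev
  rw [show i + j - 1 - i + 1 = j by omega] at hcur
  rw [hprev, hcur]
  exact sum_le_sum_of_subset (Icc_subset_Icc_right (by omega))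

theorem nubarMap_nuMap {y : ℕ → ℕ → ℕ} (hy : IsTri n y) : nubarMap n (nuMap n y) = y := by
  funext i j
  by_cases h : 1 ≤ i ∧ i ≤ n ∧ 1 ≤ j ∧ j ≤ n - i + 1
  · rw [nubarMap, if_pos h, sum_nuMap_eq hy h.1 (by omega) (by omega)]
    congr 1
    omega
  · rw [nubarMap, if_neg h, hy.1 i j h]

theorem nuMap_nubarMap {b : ℕ → ℕ → ℕ} (hb : ∀ i j, ¬(1 ≤ i ∧ i ≤ j ∧ j ≤ n) → b i j = 0) :
    nuMap n (nubarMap n b) = b := by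
  funext i j
  by_cases h : 1 ≤ i ∧ i ≤ j ∧ j ≤ n
  · obtain ⟨hi, hij, hj⟩ := h
    obtain ⟨m, rfl⟩ : ∃ m, i = m + 1 := ⟨i - 1, by omega⟩
    rw [nuMap, if_pos ⟨hi, hij, hj⟩, Nat.add_sub_cancel,
      show j - (m + 1) + 2 = j - m + 1 by omega,
      nubarMap_apply_sub_add_one b hij hj, nubarMap_apply_sub_add_one b (by omega) hj,
      sum_Icc_succ_top (by omega), Nat.add_sub_cancel_left]
  · rw [nuMap, if_neg h, hb i j h]

end

theorem nu_bijection_general (n : ℕ) (w : ℕ → ℕ) :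
    (∀ y : ℕ → ℕ → ℕ, InP n w y → InB n w (nuMap n y) ∧ nubarMap n (nuMap n y) = y) ∧
    (∀ b : ℕ → ℕ → ℕ, InB n w b → InP n w (nubarMap n b) ∧ nuMap n (nubarMap n b) = b) := by
  refine ⟨fun y ⟨hy, hdim⟩ => ⟨⟨?_, ?_⟩, nubarMap_nuMap hy⟩,
    fun b ⟨hb, hsum⟩ => ⟨⟨isTri_nubarMap b, ?_⟩, nuMap_nubarMap hb⟩⟩
  · intro i j hij
    rw [nuMap, if_neg hij]
  · intro k hk hkn
    rw [sum_sum_nuMap_eq_udim hy hk hkn, hdim k hk hkn]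
  · intro k hk hkn
    rw [udim_nubarMap b hkn, hsum k hk hkn]

/-- `ν : P(w) → B(w)` is a well-defined bijection, with inverse `ν̄`. -/
theorem nu_bijection (n : ℕ) (hn : 1 ≤ n) (w : ℕ → ℕ) :
    (∀ y : ℕ → ℕ → ℕ, InP n w y → InB n w (nuMap n y) ∧ nubarMap n (nuMap n y) = y) ∧
    (∀ b : ℕ → ℕ → ℕ, InB n w b → InP n w (nubarMap n b) ∧ nuMap n (nubarMap n b) = b) :=
  nu_bijection_general n w
end

section
/- Let Y, Z ∈ P(w) with ν(Y) = (b_{ij}) and ν(Z) = (c_{ij}). Then the condition [for all 1 ≤ ℓ ≤ k ≤ n: Σ_{i=ℓ}^k Σ_{j=k}^n b_{ij} ≥ Σ_{i=ℓ}^k Σ_{j=k}^n c_{ij}] holds if and only if the chutewise dominance condition [for all i, j: Σ_{m=1}^j y_{im} ≥ Σ_{m=1}^j z_{im}] holds. -/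
/-!
Write `b = ν(Y)`. Since `b i j = y i (j - i + 1) - y (i - 1) (j - i + 2)`, the sums
`∑_{j ≥ k} b i j` telescope in `i`: `∑_{i=ℓ}^k ∑_{j ≥ k} b i j` is `w k` minus the part of
chute `ℓ - 1` at the vertices `≥ k`, that is `w k - w (ℓ - 1)` plus the sum of the first
`k - ℓ + 1` entries of chute `ℓ - 1`. As `Y` and `Z` share `w`, the order condition at `(ℓ, k)`
is chutewise dominance at `(ℓ - 1, k - ℓ + 1)`; for `ℓ = 1` both sides are `w k`, and a full
chute `i` sums to `w i` in both arrays.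
-/

open scoped BigOperators Classical

/-- The entry `y i m` sits at vertex `i + m - 1`; this sums chute `i` over the vertices
`k, …, n`. -/
def chuteTail (n : ℕ) (y : ℕ → ℕ → ℕ) (i k : ℕ) : ℕ :=
  ∑ m ∈ Finset.Icc (k + 1 - i) (n - i + 1), y i m

theorem Finset.sum_Icc_add_eq_of_forall_add_eq {S g : ℕ → ℕ} {l k : ℕ} (hlk : l ≤ k)
    (h : ∀ i ∈ Finset.Icc l k, S i + g (i - 1) = g i) :
    ∑ i ∈ Finset.Icc l k, S i + g (l - 1) = g k := by
  induction k, hlk using Nat.le_induction with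
  | base => simpa using h l (by simp)
  | succ k hlk ih =>
    have hk := h (k + 1) (by simp; omega)
    rw [Finset.sum_Icc_succ_top (by omega)]
    rw [Nat.add_sub_cancel] at hk
    have := ih fun i hi => h i (by simp at hi ⊢; omega)
    omega

namespace IsTri

variable {n : ℕ} {y : ℕ → ℕ → ℕ}

theorem apply_zero_left (hy : IsTri n y) (j : ℕ) : y 0 j = 0 :=
  hy.1 0 j (by omega)

theorem chuteTail_zero (hy : IsTri n y) (k : ℕ) : chuteTail n y 0 k = 0 :=
  Finset.sum_eq_zero fun j _ => hy.apply_zero_left j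

theorem apply_pred_succ_le (hy : IsTri n y) {i m : ℕ} (hi : 1 ≤ i) (hin : i ≤ n) (hm : 1 ≤ m)
    (hmi : m ≤ n - i + 1) : y (i - 1) (m + 1) ≤ y i m := by
  obtain rfl | hi := eq_or_lt_of_le hi
  · simp [hy.apply_zero_left]
  · exact hy.2 i m hi hin hm hmi

/-- `ν(Y)_{i, m + i - 1} = y i m - y (i - 1) (m + 1)`, and ladder monotonicity makes this
truncated subtraction exact. -/
theorem sum_nuMap_add_chuteTail (hy : IsTri n y) {i k : ℕ} (hi : 1 ≤ i) (hik : i ≤ k)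
    (hk : k ≤ n) :
    ∑ j ∈ Finset.Icc k n, nuMap n y i j + chuteTail n y (i - 1) k = chuteTail n y i k := by
  have hnu : ∑ j ∈ Finset.Icc k n, nuMap n y i j =
      ∑ m ∈ Finset.Icc (k + 1 - i) (n - i + 1), (y i m - y (i - 1) (m + 1)) := by
    rw [show Finset.Icc k n = (Finset.Icc (k + 1 - i) (n - i + 1)).map (addRightEmbedding (i - 1))
      by rw [Finset.map_add_right_Icc]; congr 1 <;> omega, Finset.sum_map]
    refine Finset.sum_congr rfl fun m hm => ?_
    rw [Finset.mem_Icc] at hm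
    simp only [addRightEmbedding_apply, nuMap, if_pos (show 1 ≤ i ∧ i ≤ m + (i - 1) ∧
      m + (i - 1) ≤ n by omega), show m + (i - 1) - i + 1 = m by omega,
      show m + (i - 1) - i + 2 = m + 1 by omega]
  have htail : chuteTail n y (i - 1) k =
      ∑ m ∈ Finset.Icc (k + 1 - i) (n - i + 1), y (i - 1) (m + 1) := by
    rw [chuteTail, show Finset.Icc (k + 1 - (i - 1)) (n - (i - 1) + 1) =
      (Finset.Icc (k + 1 - i) (n - i + 1)).map (addRightEmbedding 1)
      by rw [Finset.map_add_right_Icc]; congr 1 <;> omega, Finset.sum_map]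
    rfl
  rw [hnu, htail, ← Finset.sum_add_distrib, chuteTail]
  refine Finset.sum_congr rfl fun m hm => ?_
  rw [Finset.mem_Icc] at hm
  exact Nat.sub_add_cancel (hy.apply_pred_succ_le hi (by omega) (by omega) hm.2)

theorem sum_sum_nuMap_add_chuteTail (hy : IsTri n y) {l k : ℕ} (hl : 1 ≤ l) (hlk : l ≤ k)
    (hk : k ≤ n) :
    ∑ i ∈ Finset.Icc l k, ∑ j ∈ Finset.Icc k n, nuMap n y i j + chuteTail n y (l - 1) k =
      udim n y k := by
  refine (Finset.sum_Icc_add_eq_of_forall_add_eq (g := (chuteTail n y · k)) hlk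
    fun i hi => ?_).trans ?_
  · rw [Finset.mem_Icc] at hi
    exact hy.sum_nuMap_add_chuteTail (by omega) hi.2 hk
  · rw [chuteTail, udim, Nat.add_sub_cancel_left]

end IsTri

theorem sum_Icc_add_chuteTail (n : ℕ) (y : ℕ → ℕ → ℕ) {i j : ℕ} (hij : i + j ≤ n + 1) :
    ∑ m ∈ Finset.Icc 1 j, y i m + chuteTail n y i (i + j) = udim n y i := by
  have hIcc (b : ℕ) : Finset.Icc 1 b = Finset.Ioc 0 b := Finset.Icc_add_one_left_eq_Ioc 0 b
  rw [chuteTail, udim, show i + j + 1 - i = j + 1 by omega, Finset.Icc_add_one_left_eq_Ioc,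
    hIcc, hIcc, Finset.sum_Ioc_consecutive _ (Nat.zero_le j) (by omega)]

namespace InP

variable {n : ℕ} {w : ℕ → ℕ} {y : ℕ → ℕ → ℕ}

theorem sum_sum_nuMap_eq (hy : InP n w y) {k : ℕ} (hk1 : 1 ≤ k) (hk : k ≤ n) :
    ∑ i ∈ Finset.Icc 1 k, ∑ j ∈ Finset.Icc k n, nuMap n y i j = w k := by
  simpa [hy.1.chuteTail_zero, hy.2 k hk1 hk] using
    hy.1.sum_sum_nuMap_add_chuteTail le_rfl hk1 hk

/-- Both sides equal `w (i + j) + w i - chuteTail n y i (i + j)`. -/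
theorem sum_sum_nuMap_add_eq (hy : InP n w y) {i j : ℕ} (hi : 1 ≤ i) (hj : 1 ≤ j)
    (hij : i + j ≤ n) :
    ∑ a ∈ Finset.Icc (i + 1) (i + j), ∑ b ∈ Finset.Icc (i + j) n, nuMap n y a b + w i =
      w (i + j) + ∑ m ∈ Finset.Icc 1 j, y i m := by
  have hS := hy.1.sum_sum_nuMap_add_chuteTail (by omega : 1 ≤ i + 1) (by omega) hij
  have hP := sum_Icc_add_chuteTail n y (by omega : i + j ≤ n + 1)
  rw [Nat.add_sub_cancel, hy.2 _ (by omega) hij] at hS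
  rw [hy.2 i hi (by omega)] at hP
  omega

end InP

theorem order_condition_iff_chutewise_dominance_general (n : ℕ) (w : ℕ → ℕ)
    (y z : ℕ → ℕ → ℕ) (hy : InP n w y) (hz : InP n w z) :
    (∀ l k, 1 ≤ l → l ≤ k → k ≤ n →
        (∑ i ∈ Finset.Icc l k, ∑ j ∈ Finset.Icc k n, nuMap n z i j) ≤
          ∑ i ∈ Finset.Icc l k, ∑ j ∈ Finset.Icc k n, nuMap n y i j) ↔
    (∀ i j, 1 ≤ i → i ≤ n → 1 ≤ j → j ≤ n - i + 1 →
        (∑ m ∈ Finset.Icc 1 j, z i m) ≤ ∑ m ∈ Finset.Icc 1 j, y i m) := by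
  constructor
  · intro horder i j hi hin hj hjn
    obtain rfl | hij := (by omega : j = n - i + 1 ∨ i + j ≤ n)
    · have hyi := hy.2 i hi hin
      have hzi := hz.2 i hi hin
      rw [udim] at hyi hzi
      omega
    · have := horder (i + 1) (i + j) (by omega) (by omega) hij
      have := hy.sum_sum_nuMap_add_eq hi hj hij
      have := hz.sum_sum_nuMap_add_eq hi hj hij
      omega
  · intro hdom l k hl hlk hk
    obtain rfl | hl := eq_or_lt_of_le hl
    · rw [hy.sum_sum_nuMap_eq hlk hk, hz.sum_sum_nuMap_eq hlk hk]
    · obtain ⟨i, rfl⟩ : ∃ i, l = i + 1 := ⟨l - 1, by omega⟩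
      obtain ⟨j, rfl⟩ : ∃ j, k = i + j := ⟨k - i, by omega⟩
      have := hdom i j (by omega) (by omega) (by omega) (by omega)
      have := hy.sum_sum_nuMap_add_eq (by omega) (by omega) hk
      have := hz.sum_sum_nuMap_add_eq (by omega) (by omega) hk
      omega

/-- For `Y, Z ∈ P(w)` with `ν(Y) = b`, `ν(Z) = c`, the condition
`∀ 1 ≤ ℓ ≤ k ≤ n, ∑_{i=ℓ}^k ∑_{j=k}^n b i j ≥ ∑_{i=ℓ}^k ∑_{j=k}^n c i j` holds iff
the chutewise dominance condition `∀ i j, ∑_{m=1}^j y i m ≥ ∑_{m=1}^j z i m` holds. -/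
theorem order_condition_iff_chutewise_dominance (n : ℕ) (hn : 1 ≤ n) (w : ℕ → ℕ)
    (y z : ℕ → ℕ → ℕ) (hy : InP n w y) (hz : InP n w z) :
    (∀ l k, 1 ≤ l → l ≤ k → k ≤ n →
        (∑ i ∈ Finset.Icc l k, ∑ j ∈ Finset.Icc k n, nuMap n z i j) ≤
          ∑ i ∈ Finset.Icc l k, ∑ j ∈ Finset.Icc k n, nuMap n y i j) ↔
    (∀ i j, 1 ≤ i → i ≤ n → 1 ≤ j → j ≤ n - i + 1 →
        (∑ m ∈ Finset.Icc 1 j, z i m) ≤ ∑ m ∈ Finset.Icc 1 j, y i m) :=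
  order_condition_iff_chutewise_dominance_general n w y z hy hz
end

section
/- For any triangular array Y of size n and 1 ≤ i ≤ n, udim(A_i(Y)) = udim(Y) + e_1 + e_2 + ... + e_i. -/
open scoped BigOperators Classical

/-!
Each application of procedure `a` raises one entry of the current chute and moves on to the
previous chute, so `A_i` raises exactly one entry in each of the chutes `i, i-1, …, 1`. The only
point to check is that the raised entry lies inside the array: the column `K_i(Y,k) ≤ k` never
increases, while the chutes get longer as the chute index decreases.
-/

lemma Raise_apply (y : ℕ → ℕ → ℕ) (i j p q : ℕ) :
    Raise y i j p q = y p q + if p = i ∧ q = j then 1 else 0 := by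
  unfold Raise
  split_ifs <;> rfl

lemma udim_Raise (n : ℕ) (y : ℕ → ℕ → ℕ) {i j : ℕ} (hj₁ : 1 ≤ j) (hj₂ : j ≤ n - i + 1)
    (c : ℕ) : udim n (Raise y i j) c = udim n y c + if c = i then 1 else 0 := by
  simp only [udim, Raise_apply, Finset.sum_add_distrib]
  by_cases hc : c = i
  · simp [hc, hj₁, hj₂]
  · simp [hc]

lemma one_le_Kval (y : ℕ → ℕ → ℕ) (i k : ℕ) : 1 ≤ Kval y i k := le_sup_right

lemma Kval_le (y : ℕ → ℕ → ℕ) (i : ℕ) {k : ℕ} (hk : 1 ≤ k) : Kval y i k ≤ k :=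
  sup_le (Finset.sup_le fun _ hj => (Finset.mem_Icc.mp (Finset.mem_filter.mp hj).1).2) hk

/-- A state `(Y, i, k)` of procedure `a` whose column `k` lies in chute `i` of a size-`n` array. -/
def ColInChute (n : ℕ) (s : (ℕ → ℕ → ℕ) × ℕ × ℕ) : Prop :=
  1 ≤ s.2.2 ∧ s.2.2 ≤ n - s.2.1 + 1

lemma colInChute_aStep {n : ℕ} {s : (ℕ → ℕ → ℕ) × ℕ × ℕ} (h : ColInChute n s) :
    ColInChute n (aStep s) := by
  refine ⟨one_le_Kval _ _ _, ?_⟩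
  show Kval s.1 s.2.1 s.2.2 ≤ n - (s.2.1 - 1) + 1
  have := Kval_le s.1 s.2.1 h.1
  have := h.2
  omega

lemma udim_aStep {n : ℕ} {s : (ℕ → ℕ → ℕ) × ℕ × ℕ} (h : ColInChute n s) (c : ℕ) :
    udim n (aStep s).1 c = udim n s.1 c + if c = s.2.1 then 1 else 0 :=
  udim_Raise n s.1 (one_le_Kval _ _ _) ((Kval_le s.1 s.2.1 h.1).trans h.2) c

lemma udim_iterate_aStep {n : ℕ} (t : ℕ) {s : (ℕ → ℕ → ℕ) × ℕ × ℕ} (h : ColInChute n s)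
    (ht : t ≤ s.2.1) (c : ℕ) :
    udim n (aStep^[t] s).1 c = udim n s.1 c + if s.2.1 - t < c ∧ c ≤ s.2.1 then 1 else 0 := by
  induction t generalizing s with
  | zero => simp
  | succ t ih =>
    have hm : (aStep s).2.1 = s.2.1 - 1 := rfl
    rw [Function.iterate_succ_apply, ih (colInChute_aStep h) (by omega), udim_aStep h, hm]
    split_ifs <;> omega

theorem udim_Aproc_general (n : ℕ) (y : ℕ → ℕ → ℕ)
    (i : ℕ) :
    ∀ k, 1 ≤ k → k ≤ n →
      udim n (Aproc n i y) k = udim n y k + (if k ≤ i then 1 else 0) := by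
  intro k hk _
  have hstart : ColInChute n (y, i, n - i + 1) := ⟨Nat.le_add_left 1 _, le_rfl⟩
  rw [Aproc, udim_iterate_aStep i hstart le_rfl]
  simp only [Nat.sub_self, show 0 < k from hk, true_and]

/-- `udim (A_i Y) = udim Y + e_1 + ⋯ + e_i`. -/
theorem udim_Aproc (n : ℕ) (y : ℕ → ℕ → ℕ) (hy : IsTri n y)
    (i : ℕ) (hi : 1 ≤ i) (hin : i ≤ n) :
    ∀ k, 1 ≤ k → k ≤ n →
      udim n (Aproc n i y) k = udim n y k + (if k ≤ i then 1 else 0) :=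
  udim_Aproc_general n y i
end

section
/- Suppose I(Y,k) < ∞ and let (Y', q) = B(Y,k). Then udim(Y') = udim(Y) - (e_1 + e_2 + ... + e_q). -/
open scoped BigOperators Classical

/-! Procedure `B` lowers exactly one entry in each of the chutes `1, …, q` it passes through: in
the terminal case it lowers `y 1 I`, and in the recursive case it lowers `y 1 I` in the top chute
`Top(Y)` that it re-adjoins, while the recursive call on `Del↘(Y)` handles chutes `2, …, q` by
induction. The call is legitimate because `y 2 (J - 1) > y 1 J ≥ 0`. -/

lemma udim_congr_row {n i : ℕ} {y y' : ℕ → ℕ → ℕ} (h : ∀ j, 1 ≤ j → y i j = y' i j) :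
    udim n y i = udim n y' i :=
  Finset.sum_congr rfl fun j hj => h j (Finset.mem_Icc.mp hj).1

lemma udim_lower_add_ite {n i j : ℕ} {y : ℕ → ℕ → ℕ} (hj1 : 1 ≤ j) (hjn : j ≤ n - i + 1)
    (hpos : 0 < y i j) (m : ℕ) :
    udim n (Lower y i j) m + (if m = i then 1 else 0) = udim n y m := by
  split_ifs with hm
  · subst m
    have hmem : j ∈ Finset.Icc 1 (n - i + 1) := Finset.mem_Icc.mpr ⟨hj1, hjn⟩
    have hrest : ∑ q ∈ (Finset.Icc 1 (n - i + 1)).erase j, Lower y i j i q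
        = ∑ q ∈ (Finset.Icc 1 (n - i + 1)).erase j, y i q :=
      Finset.sum_congr rfl fun q hq => by simp [Lower, Finset.ne_of_mem_erase hq]
    unfold udim
    rw [← Finset.add_sum_erase _ _ hmem, ← Finset.add_sum_erase _ _ hmem, hrest]
    simp only [Lower, and_self, if_true]
    omega
  · exact udim_congr_row fun q _ => by simp [Lower, hm]

lemma udim_adjChute_succ {n m : ℕ} (z : ℕ → ℕ → ℕ) (q : ℕ → ℕ) (hm : 1 ≤ m) :
    udim (n + 1) (adjChute z q) (m + 1) = udim n z m := by
  unfold udim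
  rw [show n + 1 - (m + 1) + 1 = n - m + 1 by omega]
  exact Finset.sum_congr rfl fun j _ => by simp [adjChute]; omega

lemma udim_delChute {n m : ℕ} (y : ℕ → ℕ → ℕ) (hm : 1 ≤ m) :
    udim n (delChute y) m = udim (n + 1) y (m + 1) := by
  unfold udim
  rw [show n + 1 - (m + 1) + 1 = n - m + 1 by omega]
  exact Finset.sum_congr rfl fun j hj => by
    simp [delChute, hm, (Finset.mem_Icc.mp hj).1]

lemma Iset_delChute_nonempty {n j : ℕ} {y : ℕ → ℕ → ℕ} (hj : 2 ≤ j) (hjn : j ≤ n + 1)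
    (hlt : y 1 j < y 2 (j - 1)) : (Iset n (delChute y) (j - 1)).Nonempty := by
  refine ⟨j - 1, le_rfl, by omega, ?_⟩
  simp only [delChute, if_pos (show 1 ≤ 1 ∧ 1 ≤ j - 1 by omega)]
  exact (Nat.zero_le _).trans_lt hlt

lemma udim_lower_adjChute {n i r : ℕ} {y z : ℕ → ℕ → ℕ} (hi : 1 ≤ i) (hin : i ≤ n + 1)
    (hpos : 0 < y 1 i)
    (hz : ∀ m, 1 ≤ m → m ≤ n → udim n z m + (if m ≤ r then 1 else 0) = udim n (delChute y) m) :
    ∀ m, 1 ≤ m → m ≤ n + 1 →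
      udim (n + 1) (Lower (adjChute z (y 1)) 1 i) m + (if m ≤ r + 1 then 1 else 0)
        = udim (n + 1) y m := by
  intro m hm1 hmn
  have hlower := udim_lower_add_ite (n := n + 1) (i := 1) (y := adjChute z (y 1)) hi (by omega)
    (by simpa [adjChute] using hpos) m
  by_cases hm : m = 1
  · subst hm
    have htop : udim (n + 1) (adjChute z (y 1)) 1 = udim (n + 1) y 1 :=
      udim_congr_row fun j _ => by simp [adjChute]
    rw [if_pos (by omega), ← htop]
    simpa using hlower
  · obtain ⟨m, rfl⟩ : ∃ m', m = m' + 1 := ⟨m - 1, by omega⟩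
    rw [if_neg hm, add_zero] at hlower
    rw [hlower, udim_adjChute_succ z _ (by omega), ← udim_delChute y (by omega),
      ← hz m (by omega) (by omega)]
    simp

theorem udim_Bproc_general (n : ℕ) (y : ℕ → ℕ → ℕ) (k : ℕ) (hk : 1 ≤ k) (hI : (Iset n y k).Nonempty) :
    ∀ m, 1 ≤ m → m ≤ n →
      udim n (Bproc n y k).1 m + (if m ≤ (Bproc n y k).2 then 1 else 0) = udim n y m := by
  induction n generalizing y k with
  | zero => intro m hm1 hm2; omega
  | succ n ih =>
    obtain ⟨hkI, hIn, hIpos⟩ : Idef (n + 1) y k ∈ Iset (n + 1) y k := Nat.sInf_mem hI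
    by_cases hJ : (Jset (n + 1) y k).Nonempty
    · obtain ⟨hIJ, hJn, hJlt⟩ : Jdef (n + 1) y k ∈ Jset (n + 1) y k := Nat.sInf_mem hJ
      rw [Bproc, if_pos hJ]
      exact udim_lower_adjChute (by omega) hIn hIpos
        (ih _ _ (by omega) (Iset_delChute_nonempty (by omega) hJn hJlt))
    · rw [Bproc, if_neg hJ]
      intro m _ _
      simpa [Nat.le_one_iff_eq_zero_or_eq_one, show m ≠ 0 by omega] using
        udim_lower_add_ite (n := n + 1) (by omega) (by omega) hIpos m

/-- If `I(Y,k) < ∞` and `(Y', q) = B(Y,k)`, then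
`udim Y' = udim Y - (e_1 + ⋯ + e_q)`. -/
theorem udim_Bproc (n : ℕ) (hn : 1 ≤ n) (y : ℕ → ℕ → ℕ) (hy : IsTri n y)
    (k : ℕ) (hk : 1 ≤ k) (hkn : k ≤ n) (hI : (Iset n y k).Nonempty) :
    ∀ m, 1 ≤ m → m ≤ n →
      udim n (Bproc n y k).1 m + (if m ≤ (Bproc n y k).2 then 1 else 0) = udim n y m :=
  udim_Bproc_general n y k hk hI
end

section
/- Let (Y', q_1) = B(Y, k) and (Y'', q_2) = B(Y', k') for some k' ≥ k (assuming both applications of B are defined). Then q_1 ≥ q_2. -/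
open scoped BigOperators Classical

/-! `B(Y, k)` only lowers entries, and in the top chute it changes nothing but the entry at
`I(Y, k)`. Hence every candidate for `J(B(Y, k).1, k')` is a candidate for `J(Y, k)`: if the
second application of `B` recurses, so does the first, with `J(Y, k) ≤ J(B(Y, k).1, k')`.
Since `Del↘ (B(Y, k).1)` is the output of the inner call `B(Del↘ Y, J(Y, k) - 1)`, the two inner
calls are again in the situation of the theorem, one size smaller, and induction on `n` applies. -/

lemma Bproc_succ_of_nonempty (n : ℕ) (y : ℕ → ℕ → ℕ) (k : ℕ)
    (hJ : (Jset (n + 1) y k).Nonempty) :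
    Bproc (n + 1) y k =
      (Lower (adjChute (Bproc n (delChute y) (Jdef (n + 1) y k - 1)).1 (y 1)) 1
        (Idef (n + 1) y k),
       (Bproc n (delChute y) (Jdef (n + 1) y k - 1)).2 + 1) := by
  rw [Bproc, if_pos hJ]

lemma Bproc_succ_of_not_nonempty (n : ℕ) (y : ℕ → ℕ → ℕ) (k : ℕ)
    (hJ : ¬(Jset (n + 1) y k).Nonempty) :
    Bproc (n + 1) y k = (Lower y 1 (Idef (n + 1) y k), 1) := by
  rw [Bproc, if_neg hJ]

lemma one_le_Bproc_snd (n : ℕ) (y : ℕ → ℕ → ℕ) (k : ℕ) : 1 ≤ (Bproc n y k).2 := by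
  cases n with
  | zero => simp [Bproc]
  | succ n =>
    by_cases hJ : (Jset (n + 1) y k).Nonempty
    · simp [Bproc_succ_of_nonempty n y k hJ]
    · simp [Bproc_succ_of_not_nonempty n y k hJ]

lemma Lower_le (y : ℕ → ℕ → ℕ) (i j p q : ℕ) : Lower y i j p q ≤ y p q := by
  unfold Lower
  split_ifs <;> omega

lemma Bproc_fst_le (n : ℕ) (y : ℕ → ℕ → ℕ) (k i j : ℕ) : (Bproc n y k).1 i j ≤ y i j := by
  induction n generalizing y k i with
  | zero => simp [Bproc]
  | succ n ih =>
    by_cases hJ : (Jset (n + 1) y k).Nonempty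
    · rw [Bproc_succ_of_nonempty n y k hJ]
      refine (Lower_le _ _ _ _ _).trans ?_
      unfold adjChute
      split_ifs with h0 h1
      · exact Nat.zero_le _
      · rw [h1]
      · refine (ih _ _ _).trans ?_
        unfold delChute
        split_ifs
        · rw [Nat.sub_add_cancel (by omega)]
        · exact Nat.zero_le _
    · rw [Bproc_succ_of_not_nonempty n y k hJ]
      exact Lower_le _ _ _ _ _

lemma Bproc_fst_one_of_ne (n : ℕ) (y : ℕ → ℕ → ℕ) (k j : ℕ) (hj : j ≠ Idef n y k) :
    (Bproc n y k).1 1 j = y 1 j := by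
  cases n with
  | zero => simp [Bproc]
  | succ n =>
    by_cases hJ : (Jset (n + 1) y k).Nonempty
    · simp [Bproc_succ_of_nonempty n y k hJ, Lower, adjChute, hj]
    · simp [Bproc_succ_of_not_nonempty n y k hJ, Lower, hj]

lemma delChute_Bproc_succ_fst (n : ℕ) (y : ℕ → ℕ → ℕ) (k : ℕ)
    (hJ : (Jset (n + 1) y k).Nonempty) :
    delChute (Bproc (n + 1) y k).1 = (Bproc n (delChute y) (Jdef (n + 1) y k - 1)).1 := by
  set z := (Bproc n (delChute y) (Jdef (n + 1) y k - 1)).1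
  -- `z` vanishes on row and column `0` because `Del↘ y` does and `B` only lowers entries.
  have hz : ∀ i j, ¬(1 ≤ i ∧ 1 ≤ j) → z i j = 0 := fun i j hij =>
    Nat.eq_zero_of_le_zero ((Bproc_fst_le _ _ _ i j).trans_eq (if_neg hij))
  funext i j
  rw [Bproc_succ_of_nonempty n y k hJ]
  by_cases hij : 1 ≤ i ∧ 1 ≤ j
  · simp [delChute, Lower, adjChute, hij, z, show i ≠ 0 by omega]
  · simp only [delChute, if_neg hij, hz i j hij]

lemma Idef_le_Idef_Bproc (n : ℕ) (y : ℕ → ℕ → ℕ) {k k' : ℕ} (hkk' : k ≤ k')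
    (hI' : (Iset n (Bproc n y k).1 k').Nonempty) :
    Idef n y k ≤ Idef n (Bproc n y k).1 k' := by
  obtain ⟨hk', hn, hpos⟩ := Nat.sInf_mem hI'
  exact Nat.sInf_le ⟨hkk'.trans hk', hn, hpos.trans_le (Bproc_fst_le _ _ _ _ _)⟩

lemma Iset_nonempty_of_Bproc (n : ℕ) (y : ℕ → ℕ → ℕ) {k k' : ℕ} (hkk' : k ≤ k')
    (hI' : (Iset n (Bproc n y k).1 k').Nonempty) : (Iset n y k).Nonempty := by
  obtain ⟨j, hk', hn, hpos⟩ := hI'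
  exact ⟨j, hkk'.trans hk', hn, hpos.trans_le (Bproc_fst_le _ _ _ _ _)⟩

lemma Jset_Bproc_subset (n : ℕ) (y : ℕ → ℕ → ℕ) {k k' : ℕ} (hkk' : k ≤ k')
    (hI' : (Iset n (Bproc n y k).1 k').Nonempty) :
    Jset n (Bproc n y k).1 k' ⊆ Jset n y k := by
  rintro j ⟨hI'j, hjn, hlt⟩
  have hIj : Idef n y k < j := (Idef_le_Idef_Bproc n y hkk' hI').trans_lt hI'j
  refine ⟨hIj, hjn, ?_⟩
  rw [Bproc_fst_one_of_ne n y k j hIj.ne'] at hlt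
  exact hlt.trans_le (Bproc_fst_le _ _ _ _ _)

theorem Bproc_q_antitone_general (n : ℕ) (y : ℕ → ℕ → ℕ)
    (k k' : ℕ) (hk : 1 ≤ k) (hkk' : k ≤ k')
    (hI' : (Iset n (Bproc n y k).1 k').Nonempty) :
    (Bproc n (Bproc n y k).1 k').2 ≤ (Bproc n y k).2 := by
  induction n generalizing y k k' with
  | zero => simp [Bproc]
  | succ n ih =>
    set y' := (Bproc (n + 1) y k).1
    by_cases hJ' : (Jset (n + 1) y' k').Nonempty
    swap
    · simpa [Bproc_succ_of_not_nonempty n y' k' hJ'] using one_le_Bproc_snd (n + 1) y k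
    have hsub := Jset_Bproc_subset (n + 1) y hkk' hI'
    have hJ := hJ'.mono hsub
    have hJle : Jdef (n + 1) y k ≤ Jdef (n + 1) y' k' := csInf_le_csInf' hJ' hsub
    have hIJ : Idef (n + 1) y k < Jdef (n + 1) y k := (Nat.sInf_mem hJ).1
    obtain ⟨hI'J', hJ'n, hJ'lt⟩ : Jdef (n + 1) y' k' ∈ Jset (n + 1) y' k' := Nat.sInf_mem hJ'
    have hkI : k ≤ Idef (n + 1) y k := (Nat.sInf_mem (Iset_nonempty_of_Bproc _ y hkk' hI')).1
    have hk'I' : k' ≤ Idef (n + 1) y' k' := (Nat.sInf_mem hI').1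
    have hdel := delChute_Bproc_succ_fst n y k hJ
    rw [Bproc_succ_of_nonempty n y' k' hJ', Bproc_succ_of_nonempty n y k hJ, hdel]
    refine Nat.succ_le_succ (ih _ _ _ (by omega) (by omega) ⟨_, le_rfl, by omega, ?_⟩)
    -- the new top chute is the old second chute, which exceeds `y' 1 J'` at `J' - 1`
    have hrow : (Bproc n (delChute y) (Jdef (n + 1) y k - 1)).1 1 (Jdef (n + 1) y' k' - 1) =
        y' 2 (Jdef (n + 1) y' k' - 1) := by
      rw [← hdel, delChute, if_pos (by omega)]
    omega

/-- If `(Y', q₁) = B(Y,k)` and `(Y'', q₂) = B(Y',k')` with `k' ≥ k`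
(both defined), then `q₁ ≥ q₂`. -/
theorem Bproc_q_antitone (n : ℕ) (hn : 1 ≤ n) (y : ℕ → ℕ → ℕ) (hy : IsTri n y)
    (k k' : ℕ) (hk : 1 ≤ k) (hkk' : k ≤ k') (hk'n : k' ≤ n)
    (hI : (Iset n y k).Nonempty) (hI' : (Iset n (Bproc n y k).1 k').Nonempty) :
    (Bproc n (Bproc n y k).1 k').2 ≤ (Bproc n y k).2 :=
  Bproc_q_antitone_general n y k k' hk hkk' hI'
end
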